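/- arXiv:2604.01426 — 2 statements merged into one kernel-verified Lean document; each statement's English description precedes it below -/
import Mathlib

section
/- Let L̄ = L ⊗ I_d where L is the Laplacian of a connected graph on m vertices. For fixed Ā_i = diag(A_{i1},…,A_{im}) (block diagonal with d×d blocks), b̄_i the stacked vector of b_{ij} ∈ ℝ^d, A_i = [A_{i1} ⋯ A_{im}], and b_i = Σ_j b_{ij}, one has min over z_i ∈ ℝ^{md} of ‖Ā_i x − b̄_i − L̄ z_i‖² = (1/m)‖A_i x − b_i‖² for every x ∈ ℝ^{md}. -/
/-!
The columns of a graph Laplacian sum to zero, so for each coordinate `r ∈ Fin d` the sum over the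
vertices of the `r`-th coordinates of the residual `Āx − b̄ − L̄z` does not depend on `z`: it is the
`r`-th entry of `[A_1 ⋯ A_m] x − Σ_j b j`. By Cauchy–Schwarz the squared norm of these `m`
coordinates is at least `1/m` times the square of their sum. For a connected graph the range of
the Laplacian is exactly the hyperplane of sum-zero vectors (its kernel is the line of constants),
so `z` can be chosen to make the residual constant along the vertices, which attains the bound.
-/

open Finset Matrix Kronecker

namespace SimpleGraph

variable {V : Type*} [Fintype V] [DecidableEq V] (G : SimpleGraph V) [DecidableRel G.Adj]

theorem sum_lapMatrix_mulVec {R : Type*} [CommRing R] (z : V → R) :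
    ∑ j, (G.lapMatrix R *ᵥ z) j = 0 := by
  rw [← one_dotProduct, dotProduct_mulVec, ← mulVec_transpose, (G.isSymm_lapMatrix R).eq,
    Pi.one_def, lapMatrix_mulVec_const_eq_zero, zero_dotProduct]

theorem finrank_ker_toLin'_lapMatrix_of_connected (hG : G.Connected) :
    Module.finrank ℝ (LinearMap.ker (G.lapMatrix ℝ).toLin') = 1 := by
  have : Subsingleton G.ConnectedComponent := hG.preconnected.subsingleton_connectedComponent
  have : Nonempty G.ConnectedComponent := hG.nonempty.map G.connectedComponentMk
  rw [← card_connectedComponent_eq_finrank_ker_toLin'_lapMatrix]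
  exact le_antisymm (Fintype.card_le_one_iff_subsingleton.mpr ‹_›) Fintype.card_pos

theorem exists_lapMatrix_mulVec_eq_iff_sum_eq_zero (hG : G.Connected) {u : V → ℝ} :
    (∃ z, G.lapMatrix ℝ *ᵥ z = u) ↔ ∑ j, u j = 0 := by
  let sum : (V → ℝ) →ₗ[ℝ] ℝ := ∑ j, LinearMap.proj j
  have sum_apply (w : V → ℝ) : sum w = ∑ j, w j := by simp [sum]
  have range_le : LinearMap.range (G.lapMatrix ℝ).toLin' ≤ LinearMap.ker sum := by
    rintro _ ⟨z, rfl⟩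
    rw [LinearMap.mem_ker, sum_apply, toLin'_apply, sum_lapMatrix_mulVec]
  have sum_surjective : Function.Surjective sum := fun c =>
    ⟨Pi.single hG.nonempty.some c, by rw [sum_apply, Finset.sum_pi_single']; simp⟩
  have range_eq : LinearMap.range (G.lapMatrix ℝ).toLin' = LinearMap.ker sum := by
    refine Submodule.eq_of_le_of_finrank_le range_le ?_
    have rank_nullity_lap := LinearMap.finrank_range_add_finrank_ker (G.lapMatrix ℝ).toLin'
    have rank_nullity_sum := LinearMap.finrank_range_add_finrank_ker sum
    rw [finrank_ker_toLin'_lapMatrix_of_connected G hG] at rank_nullity_lap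
    rw [LinearMap.range_eq_top.mpr sum_surjective, finrank_top, Module.finrank_self]
      at rank_nullity_sum
    omega
  rw [← sum_apply, ← LinearMap.mem_ker, ← range_eq]
  simp [toLin'_apply]

theorem isLeast_sum_sq_sub_lapMatrix_mulVec (hG : G.Connected) (v : V → ℝ) :
    IsLeast (Set.range fun z => ∑ j, (v j - (G.lapMatrix ℝ *ᵥ z) j) ^ 2)
      ((∑ j, v j) ^ 2 / Fintype.card V) := by
  have card_pos : (0 : ℝ) < Fintype.card V := by
    have := hG.nonempty
    exact_mod_cast Fintype.card_pos
  refine ⟨?_, ?_⟩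
  · obtain ⟨z, hz⟩ := (G.exists_lapMatrix_mulVec_eq_iff_sum_eq_zero hG
      (u := fun j => v j - (∑ i, v i) / Fintype.card V)).mpr (by
        rw [sum_sub_distrib, sum_const, card_univ, nsmul_eq_mul]
        field_simp
        ring)
    refine ⟨z, ?_⟩
    simp only [hz, sub_sub_cancel, sum_const, card_univ, nsmul_eq_mul]
    field_simp
  · rintro _ ⟨z, rfl⟩
    have cauchy_schwarz := sq_sum_le_card_mul_sum_sq (s := univ)
      (f := fun j => v j - (G.lapMatrix ℝ *ᵥ z) j)
    rw [sum_sub_distrib, sum_lapMatrix_mulVec, sub_zero, card_univ] at cauchy_schwarz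
    rw [div_le_iff₀ card_pos]
    linarith

end SimpleGraph

theorem isLeast_range_sum {ι α M : Type*} [Fintype ι] [AddCommMonoid M] [PartialOrder M]
    [IsOrderedAddMonoid M] {f : ι → α → M} {c : ι → M} (h : ∀ i, IsLeast (Set.range (f i)) (c i)) :
    IsLeast (Set.range fun z : ι → α => ∑ i, f i (z i)) (∑ i, c i) := by
  choose z hz using fun i => (h i).1
  refine ⟨⟨z, by simp only [hz]⟩, ?_⟩
  rintro _ ⟨w, rfl⟩
  exact sum_le_sum fun i _ => (h i).2 ⟨w i, rfl⟩

theorem Matrix.kronecker_one_mulVec_apply {R V ι : Type*} [CommSemiring R] [Fintype V] [Fintype ι]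
    [DecidableEq ι] (L : Matrix V V R) (z : V × ι → R) (j : V) (r : ι) :
    ((L ⊗ₖ (1 : Matrix ι ι R)) *ᵥ z) (j, r) = (L *ᵥ fun k => z (k, r)) j := by
  simp [mulVec, dotProduct, Fintype.sum_prod_type, one_apply]

theorem Matrix.mulVec_apply_of_blockDiagonal {R ι κ : Type*} [Semiring R] [Fintype ι] [Fintype κ]
    [DecidableEq ι] {A : ι → Matrix κ κ R} {M : Matrix (ι × κ) (ι × κ) R}
    (hM : ∀ p q, M p q = if p.1 = q.1 then A p.1 p.2 q.2 else 0) (x : ι × κ → R) (j : ι) (r : κ) :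
    (M *ᵥ x) (j, r) = (A j *ᵥ fun c => x (j, c)) r := by
  simp [mulVec, dotProduct, Fintype.sum_prod_type, hM]

theorem min_over_z_eq_inv_m_residual_general (m d : ℕ)
    (G : SimpleGraph (Fin m)) [DecidableRel G.Adj] (hconn : G.Connected)
    (Lbar : Matrix (Fin m × Fin d) (Fin m × Fin d) ℝ)
    (hLbar : Lbar = (G.lapMatrix ℝ) ⊗ₖ (1 : Matrix (Fin d) (Fin d) ℝ))
    (A : Fin m → Matrix (Fin d) (Fin d) ℝ) (b : Fin m → Fin d → ℝ)
    (Abar : Matrix (Fin m × Fin d) (Fin m × Fin d) ℝ)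
    (hAbar : ∀ p q, Abar p q = if p.1 = q.1 then A p.1 p.2 q.2 else 0)
    (bbar : Fin m × Fin d → ℝ) (hbbar : ∀ p, bbar p = b p.1 p.2)
    (x : Fin m × Fin d → ℝ) :
    IsLeast {c : ℝ | ∃ z : Fin m × Fin d → ℝ,
        c = ∑ p, (Abar.mulVec x p - bbar p - Lbar.mulVec z p) ^ 2}
      ((1 / (m : ℝ)) *
        ∑ r : Fin d,
          ((∑ j : Fin m, (A j).mulVec (fun c => x (j, c)) r) - ∑ j : Fin m, b j r) ^ 2) := by
  subst hLbar
  set v : Fin m × Fin d → ℝ := fun p => (Abar *ᵥ x) p - bbar p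
  have column_sum (r : Fin d) :
      (∑ j, (A j *ᵥ fun c => x (j, c)) r) - ∑ j, b j r = ∑ j, v (j, r) := by
    simp only [v, sum_sub_distrib, hbbar, mulVec_apply_of_blockDiagonal hAbar]
  have objective (z : Fin m × Fin d → ℝ) :
      ∑ p, ((Abar *ᵥ x) p - bbar p - ((G.lapMatrix ℝ ⊗ₖ 1) *ᵥ z) p) ^ 2
        = ∑ r, ∑ j, (v (j, r) - (G.lapMatrix ℝ *ᵥ fun k => z (k, r)) j) ^ 2 := by
    rw [Fintype.sum_prod_type, sum_comm]
    simp only [v, kronecker_one_mulVec_apply]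
  have objective_range : {c : ℝ | ∃ z : Fin m × Fin d → ℝ,
      c = ∑ p, ((Abar *ᵥ x) p - bbar p - ((G.lapMatrix ℝ ⊗ₖ 1) *ᵥ z) p) ^ 2}
        = Set.range fun z : Fin d → Fin m → ℝ =>
          ∑ r, ∑ j, (v (j, r) - (G.lapMatrix ℝ *ᵥ z r) j) ^ 2 := by
    ext c
    simp only [objective, Set.mem_ofPred_eq, Set.mem_range, eq_comm (a := c)]
    exact ⟨fun ⟨z, hz⟩ => ⟨fun r k => z (k, r), hz⟩, fun ⟨z, hz⟩ => ⟨fun p => z p.2 p.1, hz⟩⟩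
  have value : (1 / (m : ℝ)) * ∑ r : Fin d,
      ((∑ j, (A j *ᵥ fun c => x (j, c)) r) - ∑ j, b j r) ^ 2
        = ∑ r, (∑ j, v (j, r)) ^ 2 / Fintype.card (Fin m) := by
    simp only [column_sum, mul_sum, Fintype.card_fin, one_div_mul_eq_div]
  rw [objective_range, value]
  exact isLeast_range_sum fun r => G.isLeast_sum_sq_sub_lapMatrix_mulVec hconn fun j => v (j, r)

/-- Let `L̄ = L ⊗ I_d` where `L` is the Laplacian of a connected graph on `m` vertices.
For `Ā = diag(A_1,…,A_m)` block diagonal with `d×d` blocks `A j`, `b̄` the stacked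
vector of the `b j ∈ ℝ^d`, row block `[A_1 ⋯ A_m]` and `bᵢ = Σ_j b j`, we have
`min_{z} ‖Ā x − b̄ − L̄ z‖² = (1/m) ‖[A_1 ⋯ A_m] x − Σ_j b j‖²` for every `x`
(squared Euclidean norms written as sums of squares). -/
theorem min_over_z_eq_inv_m_residual (m d : ℕ) (hm : 0 < m) (hd : 0 < d)
    (G : SimpleGraph (Fin m)) [DecidableRel G.Adj] (hconn : G.Connected)
    (Lbar : Matrix (Fin m × Fin d) (Fin m × Fin d) ℝ)
    (hLbar : Lbar = (G.lapMatrix ℝ) ⊗ₖ (1 : Matrix (Fin d) (Fin d) ℝ))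
    (A : Fin m → Matrix (Fin d) (Fin d) ℝ) (b : Fin m → Fin d → ℝ)
    (Abar : Matrix (Fin m × Fin d) (Fin m × Fin d) ℝ)
    (hAbar : ∀ p q, Abar p q = if p.1 = q.1 then A p.1 p.2 q.2 else 0)
    (bbar : Fin m × Fin d → ℝ) (hbbar : ∀ p, bbar p = b p.1 p.2)
    (x : Fin m × Fin d → ℝ) :
    IsLeast {c : ℝ | ∃ z : Fin m × Fin d → ℝ,
        c = ∑ p, (Abar.mulVec x p - bbar p - Lbar.mulVec z p) ^ 2}
      ((1 / (m : ℝ)) *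
        ∑ r : Fin d,
          ((∑ j : Fin m, (A j).mulVec (fun c => x (j, c)) r) - ∑ j : Fin m, b j r) ^ 2) :=
  min_over_z_eq_inv_m_residual_general m d G hconn Lbar hLbar A b Abar hAbar bbar hbbar x
end

section
/- Let f(θ) = ⟨0| U(θ)† M U(θ) |0⟩ where U(θ) = B e^{-iθG/2} C for fixed unitaries B, C, a Hermitian operator M, and a Hermitian involution G (G² = I). Then ∂f/∂θ = (1/2)[f(θ + π/2) − f(θ − π/2)] (the parameter shift rule). -/
/-!
Writing `x = B C ψ` and `y = B G C ψ`, the state is `U θ ψ = cos(θ/2) x − i sin(θ/2) y`, so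
`f θ` is a real quadratic form in `(cos(θ/2), sin(θ/2))`. By the half-angle formulas it is a
trigonometric polynomial `a + b cos θ + c sin θ` of degree one, and for such a function the shift
by `±π/2` turns `cos` into `∓ sin` and `sin` into `± cos`, which is exactly the derivative.
-/

open scoped ComplexInnerProductSpace

open Complex in
lemma re_inner_map_ofReal_smul_sub_I_smul {E : Type*} [NormedAddCommGroup E] [InnerProductSpace ℂ E]
    (M : E →ₗ[ℂ] E) (x y : E) (c s : ℝ) :
    (⟪(c : ℂ) • x - ((s : ℂ) * I) • y, M ((c : ℂ) • x - ((s : ℂ) * I) • y)⟫).re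
      = c ^ 2 * (⟪x, M x⟫).re + s ^ 2 * (⟪y, M y⟫).re
        + c * s * (I * (⟪y, M x⟫ - ⟪x, M y⟫)).re := by
  simp only [map_sub, map_smul, inner_sub_left, inner_sub_right, inner_smul_left,
    inner_smul_right, map_mul, conj_ofReal, conj_I]
  simp only [sub_re, mul_re, ofReal_re, ofReal_im, I_re, I_im, neg_re, neg_im, sub_im, mul_im]
  ring

lemma half_angle_quadratic_eq_trig (p q r t : ℝ) :
    Real.cos (t / 2) ^ 2 * p + Real.sin (t / 2) ^ 2 * q
        + Real.cos (t / 2) * Real.sin (t / 2) * r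
      = (p + q) / 2 + (p - q) / 2 * Real.cos t + r / 2 * Real.sin t := by
  have hcos : Real.cos t = 2 * Real.cos (t / 2) ^ 2 - 1 := by
    rw [← Real.cos_two_mul, mul_div_cancel₀ t two_ne_zero]
  have hsin : Real.sin t = 2 * Real.sin (t / 2) * Real.cos (t / 2) := by
    rw [← Real.sin_two_mul, mul_div_cancel₀ t two_ne_zero]
  rw [hcos, hsin]
  linear_combination q * Real.sin_sq_add_cos_sq (t / 2)

lemma hasDerivAt_parameter_shift_of_trig {f : ℝ → ℝ} {a b c : ℝ}
    (hf : ∀ t, f t = a + b * Real.cos t + c * Real.sin t) (θ : ℝ) :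
    HasDerivAt f ((1 / 2) * (f (θ + Real.pi / 2) - f (θ - Real.pi / 2))) θ := by
  have hshift : (1 / 2) * (f (θ + Real.pi / 2) - f (θ - Real.pi / 2))
      = b * -Real.sin θ + c * Real.cos θ := by
    simp only [hf, Real.cos_add_pi_div_two, Real.sin_add_pi_div_two,
      Real.cos_sub_pi_div_two, Real.sin_sub_pi_div_two]
    ring
  rw [hshift, funext hf]
  exact (((Real.hasDerivAt_cos θ).const_mul b).const_add a).add
    ((Real.hasDerivAt_sin θ).const_mul c)

theorem parameter_shift_rule_general {E : Type*} [NormedAddCommGroup E]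
    [InnerProductSpace ℂ E]
    (ψ : E)
    (B C M G : E →ₗ[ℂ] E)
    (U : ℝ → (E →ₗ[ℂ] E))
    (hU : ∀ θ : ℝ, U θ =
      B ∘ₗ (Complex.cos ((θ : ℂ) / 2) • LinearMap.id
        - (Complex.sin ((θ : ℂ) / 2) * Complex.I) • G) ∘ₗ C)
    (f : ℝ → ℝ) (hf : ∀ θ, f θ = (⟪U θ ψ, M (U θ ψ)⟫).re) :
    ∀ θ : ℝ, HasDerivAt f ((1 / 2) * (f (θ + Real.pi / 2) - f (θ - Real.pi / 2))) θ := by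
  intro θ
  have hstate : ∀ t : ℝ, U t ψ = (Real.cos (t / 2) : ℂ) • B (C ψ)
      - ((Real.sin (t / 2) : ℂ) * Complex.I) • B (G (C ψ)) := by
    intro t
    simp [hU, Complex.ofReal_cos, Complex.ofReal_sin]
  apply hasDerivAt_parameter_shift_of_trig
  intro t
  rw [hf, hstate, re_inner_map_ofReal_smul_sub_I_smul, half_angle_quadratic_eq_trig]

/-- Parameter shift rule: for `f(θ) = ⟨0| U(θ)† M U(θ) |0⟩` with
`U(θ) = B e^{-iθG/2} C = B (cos(θ/2) I − i sin(θ/2) G) C`, where `B, C` are unitary,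
`M` is Hermitian, and `G` is a Hermitian involution, one has
`∂f/∂θ = (1/2)[f(θ + π/2) − f(θ − π/2)]`. -/
theorem parameter_shift_rule {E : Type*} [NormedAddCommGroup E]
    [InnerProductSpace ℂ E] [FiniteDimensional ℂ E]
    (ψ : E) (hψ : ‖ψ‖ = 1)
    (B C M G : E →ₗ[ℂ] E)
    (hB : LinearMap.adjoint B ∘ₗ B = LinearMap.id ∧ B ∘ₗ LinearMap.adjoint B = LinearMap.id)
    (hC : LinearMap.adjoint C ∘ₗ C = LinearMap.id ∧ C ∘ₗ LinearMap.adjoint C = LinearMap.id)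
    (hM : LinearMap.adjoint M = M)
    (hG : LinearMap.adjoint G = G) (hG2 : G ∘ₗ G = LinearMap.id)
    (U : ℝ → (E →ₗ[ℂ] E))
    (hU : ∀ θ : ℝ, U θ =
      B ∘ₗ (Complex.cos ((θ : ℂ) / 2) • LinearMap.id
        - (Complex.sin ((θ : ℂ) / 2) * Complex.I) • G) ∘ₗ C)
    (f : ℝ → ℝ) (hf : ∀ θ, f θ = (⟪U θ ψ, M (U θ ψ)⟫).re) :
    ∀ θ : ℝ, HasDerivAt f ((1 / 2) * (f (θ + Real.pi / 2) - f (θ - Real.pi / 2))) θ :=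
  parameter_shift_rule_general ψ B C M G U hU f hf
end
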